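/- For any k ≥ 1 and any finite collection of c ≥ 1 affine hyperplanes H₁, …, H_c in ℝ^k, the complement ℝ^k \ (H₁ ∪ ⋯ ∪ H_c) has at most (c+1)^k connected components. -/

import Mathlib

/-!
Points of the complement with the same sign vector with respect to the affine functionals lie
in a common convex, hence connected, cell; so there are at most as many components as realized
sign vectors. These are counted by induction on the number of functionals. Forgetting the last
functional `g` identifies at most pairs of sign vectors, and a pair only occurs when the cell of
the shorter vector meets the hyperplane `g = 0`, where it is a realized sign vector of the
restricted arrangement in one dimension less. Hence, with `d` the dimension,
`N(m + 1, d) ≤ N(m, d) + N(m, d - 1) ≤ (m + 1) ^ d + (m + 1) ^ (d - 1) ≤ (m + 2) ^ d`.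
-/

open Module Set

theorem Function.image_eq_image_invFunOn_image {α β γ : Type*} [Nonempty α] {S : Set α}
    {F : α → β} {p : α → γ} (h : ∀ x ∈ S, ∀ y ∈ S, p x = p y → F x = F y) :
    F '' S = (F ∘ Function.invFunOn p S) '' (p '' S) := by
  rw [image_image]
  refine image_congr fun x hx => (h _ (invFunOn_mem ⟨x, hx, rfl⟩) x hx ?_).symm
  exact invFunOn_eq ⟨x, hx, rfl⟩

section Arrangement

variable {ι E : Type*} [AddCommGroup E] [Module ℝ E]

def arrangementComplement (f : ι → E →ᵃ[ℝ] ℝ) : Set E := {z | ∀ i, f i z ≠ 0}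

noncomputable def signPattern (f : ι → E →ᵃ[ℝ] ℝ) (z : E) : ι → SignType :=
  fun i => SignType.sign (f i z)

theorem convex_setOf_sign_eq (e : SignType) : Convex ℝ {t : ℝ | SignType.sign t = e} := by
  cases e
  · simp only [SignType.zero_eq_zero, sign_eq_zero_iff]; exact convex_singleton 0
  · simp only [SignType.neg_eq_neg_one, sign_eq_neg_one_iff]; exact convex_Iio 0
  · simp only [SignType.pos_eq_one, sign_eq_one_iff]; exact convex_Ioi 0

theorem convex_setOf_signPattern_eq (f : ι → E →ᵃ[ℝ] ℝ) (ε : ι → SignType) :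
    Convex ℝ {z | signPattern f z = ε} := by
  have : {z | signPattern f z = ε} = ⋂ i, f i ⁻¹' {t | SignType.sign t = ε i} := by
    ext z
    simp only [mem_ofPred_eq, mem_iInter, mem_preimage, funext_iff, signPattern]
  rw [this]
  exact convex_iInter fun i => (convex_setOf_sign_eq (ε i)).affine_preimage (f i)

theorem setOf_signPattern_eq_subset {f : ι → E →ᵃ[ℝ] ℝ} {z : E}
    (hz : z ∈ arrangementComplement f) :
    {x | signPattern f x = signPattern f z} ⊆ arrangementComplement f := fun x hx i h => by
  have := congrFun hx i
  simp only [signPattern, h, sign_zero] at this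
  exact hz i (sign_eq_zero_iff.mp this.symm)

theorem Convex.exists_affineMap_eq_zero {s : Set E} (hs : Convex ℝ s) (g : E →ᵃ[ℝ] ℝ)
    {x y : E} (hx : x ∈ s) (hy : y ∈ s) (hgx : g x < 0) (hgy : 0 < g y) :
    ∃ z ∈ s, g z = 0 := by
  have hne : g x - g y ≠ 0 := by linarith
  refine ⟨AffineMap.lineMap x y (g x / (g x - g y)),
    hs.lineMap_mem hx hy ⟨?_, ?_⟩, ?_⟩
  · exact div_nonneg_of_nonpos hgx.le (by linarith)
  · rw [div_le_one_of_neg (by linarith)]; linarith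
  · rw [AffineMap.apply_lineMap, AffineMap.lineMap_apply_ring']
    field_simp
    ring

theorem connectedComponentIn_eq_of_signPattern_eq [TopologicalSpace E] [IsTopologicalAddGroup E]
    [ContinuousSMul ℝ E] {f : ι → E →ᵃ[ℝ] ℝ} {x y : E} (hx : x ∈ arrangementComplement f)
    (h : signPattern f y = signPattern f x) :
    connectedComponentIn (arrangementComplement f) x =
      connectedComponentIn (arrangementComplement f) y :=
  connectedComponentIn_eq <| (convex_setOf_signPattern_eq f _).isPreconnected
    |>.subset_connectedComponentIn rfl (setOf_signPattern_eq_subset hx) h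

theorem image_connectedComponentIn_eq_image_signPattern [TopologicalSpace E]
    [IsTopologicalAddGroup E] [ContinuousSMul ℝ E] (f : ι → E →ᵃ[ℝ] ℝ) :
    connectedComponentIn (arrangementComplement f) '' arrangementComplement f =
      (connectedComponentIn (arrangementComplement f) ∘
        Function.invFunOn (signPattern f) (arrangementComplement f)) ''
          (signPattern f '' arrangementComplement f) :=
  Function.image_eq_image_invFunOn_image fun _ hx _ _ h =>
    connectedComponentIn_eq_of_signPattern_eq hx h.symm

theorem finite_image_connectedComponentIn [Finite ι] [TopologicalSpace E]
    [IsTopologicalAddGroup E] [ContinuousSMul ℝ E] (f : ι → E →ᵃ[ℝ] ℝ) :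
    (connectedComponentIn (arrangementComplement f) '' arrangementComplement f).Finite := by
  rw [image_connectedComponentIn_eq_image_signPattern]
  exact (toFinite _).image _

theorem signPattern_image_inter_subset {F : Type*} [AddCommGroup F] [Module ℝ F]
    (f : ι → E →ᵃ[ℝ] ℝ) (φ : F →ᵃ[ℝ] E) {s : Set E} (hs : s ⊆ range φ) :
    signPattern f '' (arrangementComplement f ∩ s) ⊆
      signPattern (fun i => (f i).comp φ) '' arrangementComplement (fun i => (f i).comp φ) := by
  rintro _ ⟨_, ⟨hz, hzs⟩, rfl⟩
  obtain ⟨y, rfl⟩ := hs hzs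
  exact ⟨y, hz, rfl⟩

theorem AffineMap.exists_range_supset_setOf_eq_zero (g : E →ᵃ[ℝ] ℝ) (hg : g.linear ≠ 0) :
    ∃ φ : LinearMap.ker g.linear →ᵃ[ℝ] E, {z | g z = 0} ⊆ range φ := by
  obtain ⟨v, hv⟩ := LinearMap.surjective_iff_ne_zero.mpr hg (-g 0)
  have hgv : g v = 0 := by rw [congrFun g.decomp v, Pi.add_apply, hv, neg_add_cancel]
  refine ⟨(AffineEquiv.vaddConst ℝ v).toAffineMap.comp
    (LinearMap.ker g.linear).subtype.toAffineMap, fun z hz => ⟨⟨z - v, ?_⟩, ?_⟩⟩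
  · rw [LinearMap.mem_ker, ← vsub_eq_sub, g.linearMap_vsub, hz, hgv, vsub_self]
  · simp

theorem init_image_inter_subset {m : ℕ} (f : Fin (m + 1) → E →ᵃ[ℝ] ℝ) :
    Fin.init '' {σ ∈ signPattern f '' arrangementComplement f | σ (Fin.last m) = -1} ∩
        Fin.init '' {σ ∈ signPattern f '' arrangementComplement f | σ (Fin.last m) = 1} ⊆
      signPattern (Fin.init f) ''
        (arrangementComplement (Fin.init f) ∩ {z | f (Fin.last m) z = 0}) := by
  rintro _ ⟨⟨_, ⟨⟨x, hx, rfl⟩, hxs⟩, rfl⟩, ⟨_, ⟨⟨y, hy, rfl⟩, hys⟩, hxy⟩⟩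
  have hx' : x ∈ arrangementComplement (Fin.init f) := fun i => hx _
  obtain ⟨z, hz, hz0⟩ := (convex_setOf_signPattern_eq (Fin.init f) _).exists_affineMap_eq_zero
    (f (Fin.last m)) (x := x) rfl hxy (sign_eq_neg_one_iff.mp hxs) (sign_eq_one_iff.mp hys)
  exact ⟨z, ⟨setOf_signPattern_eq_subset hx' hz, hz0⟩, hz⟩

end Arrangement

theorem Set.ncard_le_ncard_image_init_add {α : Type*} [Finite α] {m : ℕ}
    (S : Set (Fin (m + 1) → α)) (a b : α) (hS : ∀ σ ∈ S, σ (Fin.last m) = a ∨ σ (Fin.last m) = b) :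
    S.ncard ≤ (Fin.init '' S).ncard + (Fin.init '' {σ ∈ S | σ (Fin.last m) = a} ∩
      Fin.init '' {σ ∈ S | σ (Fin.last m) = b}).ncard := by
  have hinj (c : α) : InjOn Fin.init {σ ∈ S | σ (Fin.last m) = c} := fun σ hσ τ hτ h => by
    rw [← Fin.snoc_init_self σ, ← Fin.snoc_init_self τ, h, hσ.2, hτ.2]
  calc S.ncard
      ≤ ({σ ∈ S | σ (Fin.last m) = a} ∪ {σ ∈ S | σ (Fin.last m) = b}).ncard :=
        ncard_le_ncard fun σ hσ => (hS σ hσ).imp (⟨hσ, ·⟩) (⟨hσ, ·⟩)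
    _ ≤ {σ ∈ S | σ (Fin.last m) = a}.ncard + {σ ∈ S | σ (Fin.last m) = b}.ncard :=
        ncard_union_le _ _
    _ = (Fin.init '' {σ ∈ S | σ (Fin.last m) = a} ∪ Fin.init '' {σ ∈ S | σ (Fin.last m) = b}).ncard
          + (Fin.init '' {σ ∈ S | σ (Fin.last m) = a} ∩
            Fin.init '' {σ ∈ S | σ (Fin.last m) = b}).ncard := by
        rw [ncard_union_add_ncard_inter, (hinj a).ncard_image, (hinj b).ncard_image]
    _ ≤ _ := Nat.add_le_add_right
        (ncard_le_ncard (union_subset (image_mono (sep_subset _ _)) (image_mono (sep_subset _ _))))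
        _

theorem Nat.pow_succ_add_pow_le (a n : ℕ) : a ^ (n + 1) + a ^ n ≤ (a + 1) ^ (n + 1) := by
  calc a ^ (n + 1) + a ^ n = a ^ n * (a + 1) := by ring
    _ ≤ (a + 1) ^ n * (a + 1) := by gcongr; omega
    _ = (a + 1) ^ (n + 1) := (pow_succ _ _).symm

section Counting

variable {E : Type*} [AddCommGroup E] [Module ℝ E] [FiniteDimensional ℝ E]

theorem ncard_signPattern_image_le {m : ℕ} (f : Fin m → E →ᵃ[ℝ] ℝ) :
    (signPattern f '' arrangementComplement f).ncard ≤ (m + 1) ^ finrank ℝ E := by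
  induction m generalizing E with
  | zero => simpa using ncard_le_one_of_subsingleton (signPattern f '' arrangementComplement f)
  | succ m ih =>
    set g := f (Fin.last m)
    set P := signPattern f '' arrangementComplement f
    have hsign : ∀ σ ∈ P, σ (Fin.last m) = -1 ∨ σ (Fin.last m) = 1 := by
      rintro _ ⟨z, hz, rfl⟩
      exact (hz _).lt_or_gt.imp sign_neg sign_pos
    have hinit :
        Fin.init '' P ⊆ signPattern (Fin.init f) '' arrangementComplement (Fin.init f) := by
      rintro _ ⟨_, ⟨z, hz, rfl⟩, rfl⟩
      exact ⟨z, fun i => hz _, rfl⟩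
    have hP := (ncard_le_ncard hinit).trans (ih (Fin.init f))
    refine (ncard_le_ncard_image_init_add P _ _ hsign).trans ?_
    rcases (Fin.init '' {σ ∈ P | σ (Fin.last m) = -1} ∩ Fin.init '' {σ ∈ P | σ (Fin.last m) = 1}
      ).eq_empty_or_nonempty with hX | ⟨_, ⟨_, ⟨⟨x, -, rfl⟩, hx⟩, rfl⟩, ⟨_, ⟨⟨y, -, rfl⟩, hy⟩, -⟩⟩
    · rw [hX, ncard_empty, add_zero]
      exact hP.trans (Nat.pow_le_pow_left (by omega) _)
    · have hg : g.linear ≠ 0 := fun h => by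
        obtain ⟨q, hq⟩ := g.linear_eq_zero_iff_exists_const.mp h
        have hgx : g x < 0 := sign_eq_neg_one_iff.mp hx
        have hgy : 0 < g y := sign_eq_one_iff.mp hy
        rw [hq, AffineMap.const_apply] at hgx hgy
        linarith
      obtain ⟨φ, hφ⟩ := g.exists_range_supset_setOf_eq_zero hg
      have hX := ((ncard_le_ncard (init_image_inter_subset f)).trans
        (ncard_le_ncard (signPattern_image_inter_subset _ φ hφ))).trans
          (ih fun i => (f i.castSucc).comp φ)
      rw [← Module.Dual.finrank_ker_add_one_of_ne_zero hg] at hP ⊢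
      exact (Nat.add_le_add hP hX).trans (Nat.pow_succ_add_pow_le _ _)

theorem ncard_image_connectedComponentIn_le [TopologicalSpace E] [IsTopologicalAddGroup E]
    [ContinuousSMul ℝ E] {m : ℕ} (f : Fin m → E →ᵃ[ℝ] ℝ) :
    (connectedComponentIn (arrangementComplement f) '' arrangementComplement f).ncard ≤
      (m + 1) ^ finrank ℝ E := by
  rw [image_connectedComponentIn_eq_image_signPattern]
  exact (ncard_image_le (toFinite _)).trans (ncard_signPattern_image_le f)

end Counting

theorem hyperplane_complement_components_general
    (k c : ℕ)
    (w : Fin c → Fin k → ℝ) (s : Fin c → ℝ) :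
    (({T : Set (Fin k → ℝ) |
        ∃ z ∈ {z : Fin k → ℝ | ∀ i, ∑ j, w i j * z j ≠ s i},
          T = connectedComponentIn {z : Fin k → ℝ | ∀ i, ∑ j, w i j * z j ≠ s i} z}).Finite) ∧
    ({T : Set (Fin k → ℝ) |
        ∃ z ∈ {z : Fin k → ℝ | ∀ i, ∑ j, w i j * z j ≠ s i},
          T = connectedComponentIn {z : Fin k → ℝ | ∀ i, ∑ j, w i j * z j ≠ s i} z}).ncard
      ≤ (c + 1) ^ k := by
  set f : Fin c → (Fin k → ℝ) →ᵃ[ℝ] ℝ := fun i =>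
    (LinearMap.proj i ∘ₗ (Matrix.of w).mulVecLin).toAffineMap - AffineMap.const ℝ _ (s i)
  have hC : {z : Fin k → ℝ | ∀ i, ∑ j, w i j * z j ≠ s i} = arrangementComplement f := by
    ext z
    simp [arrangementComplement, f, Matrix.mulVec, dotProduct, sub_eq_zero]
  have hT (C : Set (Fin k → ℝ)) :
      {T | ∃ z ∈ C, T = connectedComponentIn C z} = connectedComponentIn C '' C := by
    simp only [image, eq_comm]
  rw [hT, hC]
  refine ⟨finite_image_connectedComponentIn f, ?_⟩
  simpa only [finrank_fin_fun] using ncard_image_connectedComponentIn_le f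

/-- **Hyperplane arrangements** (used in Lemma 2.2 of the paper). `c ≥ 1` affine hyperplanes
in `ℝ^k` (`k ≥ 1`) split `ℝ^k` into at most `(c+1)^k` regions: the complement of their union
has finitely many connected components, and at most `(c+1)^k` of them. -/
theorem hyperplane_complement_components
    (k c : ℕ) (hk : 1 ≤ k) (hc : 1 ≤ c)
    (w : Fin c → Fin k → ℝ) (s : Fin c → ℝ) (hw : ∀ i, w i ≠ 0) :
    (({T : Set (Fin k → ℝ) |
        ∃ z ∈ {z : Fin k → ℝ | ∀ i, ∑ j, w i j * z j ≠ s i},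
          T = connectedComponentIn {z : Fin k → ℝ | ∀ i, ∑ j, w i j * z j ≠ s i} z}).Finite) ∧
    ({T : Set (Fin k → ℝ) |
        ∃ z ∈ {z : Fin k → ℝ | ∀ i, ∑ j, w i j * z j ≠ s i},
          T = connectedComponentIn {z : Fin k → ℝ | ∀ i, ∑ j, w i j * z j ≠ s i} z}).ncard
      ≤ (c + 1) ^ k :=
  hyperplane_complement_components_general k c w s
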